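/- arXiv:2210.02077 — 3 statements merged into one kernel-verified Lean document; each statement's English description precedes it below -/
import Mathlib

section
/- Let V be a real vector space, λ, α ∈ ℝ, and let (S^(j)), (T^(j)), (G^(j)) be sequences in V with S^(j+1) = S^(j) − λ G^(j) (gradient descent), T^(j+1) = α T^(j) + (1 − α) S^(j+1) (EMA teacher updated after every student step), and T^(0) = S^(0). Then for every t ≥ 0, S^(t) − T^(t) = −λ · Σ_{i=1}^{t} α^i G^(t−i); that is, the student–teacher difference is exactly minus λ times the exponentially weighted sum of the previous gradient directions, with weight α^i on the direction from i steps ago. -/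
/-! The difference `D t = S t - T t` satisfies `D (t + 1) = α • (D t - λ • G t)` with `D 0 = 0`,
a first-order linear recurrence whose solution is the discounted sum of its inputs. -/

open Finset

theorem Finset.sum_Icc_one_sub_eq_sum_range {M : Type*} [AddCommMonoid M] (f : ℕ → ℕ → M)
    (t : ℕ) : ∑ i ∈ Icc 1 t, f i (t - i) = ∑ j ∈ range t, f (t - j) j :=
  sum_nbij' (t - ·) (t - ·) (by simp; omega) (by simp; omega) (by simp; omega) (by simp; omega)
    (by simp; intro i _ _; congr; omega)

theorem eq_sum_range_pow_smul_of_succ_eq_smul_add {R M : Type*} [Monoid R] [AddCommMonoid M]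
    [DistribMulAction R M] {a : R} {x u : ℕ → M} (h0 : x 0 = 0)
    (hsucc : ∀ t, x (t + 1) = a • (x t + u t)) (t : ℕ) :
    x t = ∑ j ∈ range t, a ^ (t - j) • u j := by
  induction t with
  | zero => simp [h0]
  | succ t ih =>
    have hpow : ∀ j ∈ range t, a ^ (t + 1 - j) • u j = a • a ^ (t - j) • u j := by
      intro j hj
      rw [Nat.sub_add_comm (mem_range.mp hj).le, pow_succ', mul_smul]
    rw [hsucc, ih, sum_range_succ, sum_congr rfl hpow, ← smul_sum, smul_add,
      Nat.add_sub_cancel_left, pow_one]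

/-- Student–teacher difference: with gradient descent `S (j+1) = S j − λ • G j`, EMA teacher
`T (j+1) = α • T j + (1 − α) • S (j+1)` and `T 0 = S 0`, for every `t` the difference equals
`S t − T t = −λ • ∑_{i=1}^{t} α^i • G (t − i)`. -/
theorem student_teacher_difference {V : Type*} [AddCommGroup V] [Module ℝ V]
    (lam α : ℝ) (S T G : ℕ → V)
    (hS : ∀ j, S (j + 1) = S j - lam • G j)
    (hT : ∀ j, T (j + 1) = α • T j + (1 - α) • S (j + 1))
    (hT0 : T 0 = S 0) :
    ∀ t : ℕ, S t - T t = -(lam • ∑ i ∈ Finset.Icc 1 t, α ^ i • G (t - i)) := by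
  have hdiff : ∀ j, S (j + 1) - T (j + 1) = α • (S j - T j + -(lam • G j)) := by
    intro j
    rw [hT, hS]
    module
  intro t
  rw [eq_sum_range_pow_smul_of_succ_eq_smul_add (x := fun j => S j - T j) (by rw [hT0, sub_self])
      hdiff t,
    sum_Icc_one_sub_eq_sum_range (fun i j => α ^ i • G j), smul_sum, ← sum_neg_distrib]
  simp only [smul_neg, smul_comm lam]
end

section
/- (Proposition 1, exact form.) Let n ≥ 1, λ, α ∈ ℝ, and let (x^(j)), (x̂^(j)) be sequences in ℝⁿ (full and masked inputs at step j). Define sequences of real n×n matrices by: G^(j) = (S^(j) x̂^(j) − x^(j)) (x̂^(j))ᵀ + (S^(j) − T^(j)) x̂^(j) (x̂^(j))ᵀ (the total gradient of the reconstruction-plus-consistency loss at step j), S^(j+1) = S^(j) − λ G^(j), T^(j+1) = α T^(j) + (1 − α) S^(j+1), with T^(0) = S^(0). Then for every t ≥ 0 and every current masked input x̃ ∈ ℝⁿ and full input x ∈ ℝⁿ, the total gradient at time t satisfies (S^(t) x̃ x̃ᵀ − x x̃ᵀ) + (S^(t) − T^(t)) x̃ x̃ᵀ = (S^(t) x̃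 x̃ᵀ − x x̃ᵀ) − λ (Σ_{i=1}^{t} α^i G^(t−i)) x̃ x̃ᵀ; in particular the consistency gradient (S^(t) − T^(t)) x̃ x̃ᵀ equals −λ (Σ_{i=1}^{t} α^i G^(t−i)) x̃ x̃ᵀ, an exponentially weighted sum of the previous total gradients projected through x̃ x̃ᵀ with a negative sign. -/
open Matrix

/-- Proposition 1 (exact form): in the linear RC-MAE dynamics with total gradient
`G j = (S j x̂ j − x j)(x̂ j)ᵀ + (S j − T j) x̂ j (x̂ j)ᵀ`, student update
`S (j+1) = S j − λ • G j`, teacher update `T (j+1) = α • T j + (1 − α) • S (j+1)`, and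
`T 0 = S 0`, for every `t` and every current masked input `x̃` and full input `x`,
the total gradient satisfies
`(S t x̃ x̃ᵀ − x x̃ᵀ) + (S t − T t) x̃ x̃ᵀ = (S t x̃ x̃ᵀ − x x̃ᵀ) − λ (∑_{i=1}^{t} α^i G (t−i)) x̃ x̃ᵀ`;
in particular the consistency gradient equals `−λ (∑_{i=1}^{t} α^i G (t−i)) x̃ x̃ᵀ`. -/
theorem rcmae_proposition_one {n : ℕ} (hn : 1 ≤ n) (lam α : ℝ)
    (x xhat : ℕ → (Fin n → ℝ))
    (S T G : ℕ → Matrix (Fin n) (Fin n) ℝ)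
    (hG : ∀ j, G j = vecMulVec (S j *ᵥ xhat j - x j) (xhat j) +
      (S j - T j) * vecMulVec (xhat j) (xhat j))
    (hS : ∀ j, S (j + 1) = S j - lam • G j)
    (hT : ∀ j, T (j + 1) = α • T j + (1 - α) • S (j + 1))
    (hT0 : T 0 = S 0) :
    ∀ (t : ℕ) (xt xf : Fin n → ℝ),
      ((S t * vecMulVec xt xt - vecMulVec xf xt) + (S t - T t) * vecMulVec xt xt
        = (S t * vecMulVec xt xt - vecMulVec xf xt) -
            lam • ((∑ i ∈ Finset.Icc 1 t, α ^ i • G (t - i)) * vecMulVec xt xt)) ∧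
      (S t - T t) * vecMulVec xt xt
        = -(lam • ((∑ i ∈ Finset.Icc 1 t, α ^ i • G (t - i)) * vecMulVec xt xt)) := by
  -- key: closed form for S t - T t
  have key : ∀ t, S t - T t
      = -(lam • ∑ i ∈ Finset.range t, α ^ (i + 1) • G (t - (i + 1))) := by
    intro t
    induction t with
    | zero => simp [hT0]
    | succ t ih =>
      have hD : S (t + 1) - T (t + 1) = α • ((S t - T t) - lam • G t) := by
        rw [hT t, hS t]
        module
      have hsum : ∑ i ∈ Finset.range (t + 1), α ^ (i + 1) • G (t + 1 - (i + 1))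
          = α • (∑ i ∈ Finset.range t, α ^ (i + 1) • G (t - (i + 1))) + α • G t := by
        rw [Finset.sum_range_succ']
        simp only [Nat.add_sub_cancel, Finset.smul_sum]
        congr 1
        · apply Finset.sum_congr rfl
          intro i _
          have : t + 1 - (i + 1 + 1) = t - (i + 1) := by omega
          rw [this, smul_smul]
          ring_nf
        · simp
      rw [hD, ih, hsum]
      module
  intro t xt xf
  have h2 : (S t - T t) * vecMulVec xt xt
      = -(lam • ((∑ i ∈ Finset.Icc 1 t, α ^ i • G (t - i)) * vecMulVec xt xt)) := by
    have hIcc : ∑ i ∈ Finset.Icc 1 t, α ^ i • G (t - i)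
        = ∑ i ∈ Finset.range t, α ^ (i + 1) • G (t - (i + 1)) := by
      rw [← Finset.Ico_add_one_right_eq_Icc, Finset.sum_Ico_eq_sum_range]
      apply Finset.sum_congr (by norm_num)
      intro i _
      rw [add_comm 1 i]
    rw [hIcc, key t, neg_mul, Matrix.smul_mul]
  exact ⟨by rw [h2]; abel, h2⟩
end

section
/- (Bound on the consistency gradient, Equation (5), exact form.) Let n ≥ 1, λ ≥ 0, α ≥ 0, and let (x^(j)), (x̂^(j)), (G^(j)), (S^(j)), (T^(j)) be as in the linear RC-MAE dynamics: G^(j) = (S^(j) x̂^(j) − x^(j) + (S^(j) − T^(j)) x̂^(j)) (x̂^(j))ᵀ, S^(j+1) = S^(j) − λ G^(j), T^(j+1) = α T^(j) + (1 − α) S^(j+1), T^(0) = S^(0). Then for every t ≥ 0 and every x̃ ∈ ℝⁿ, the Frobenius norm of the consistency gradient satisfies ‖(S^(t) − T^(t)) x̃ x̃ᵀ‖_F ≤ λ ‖x̃‖ · Σ_{i=1}^{t} α^i |⟨x̂^(t−i), x̃⟩| · ‖S^(t−i) x̂^(t−i) − x^(t−i) + (S^(t−i) − T^(t−i)) x̂^(t−i)‖;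 in particular the bound decays exponentially in the age i of each past step and is weighted by the similarity of the past input to the current input. -/
open Matrix

/-- Euclidean norm `‖v‖ = sqrt (v ⬝ᵥ v)` on `ℝⁿ`. -/
noncomputable def euclNorm {n : ℕ} (v : Fin n → ℝ) : ℝ := Real.sqrt (v ⬝ᵥ v)

/-- Frobenius norm `‖A‖_F = sqrt (trace (Aᵀ A))`. -/
noncomputable def frobNorm {m n : ℕ} (A : Matrix (Fin m) (Fin n) ℝ) : ℝ :=
  Real.sqrt (Aᵀ * A).trace

attribute [local instance] Matrix.frobeniusNormedAddCommGroup Matrix.frobeniusNormedSpace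

lemma frobNorm_eq_norm {m n : ℕ} (A : Matrix (Fin m) (Fin n) ℝ) :
    frobNorm A = ‖A‖ := by
  rw [frobNorm, Matrix.frobenius_norm_def, Real.sqrt_eq_rpow]
  congr 1
  rw [Matrix.trace]
  simp only [Matrix.diag, Matrix.mul_apply, Matrix.transpose_apply, Real.norm_eq_abs]
  rw [Finset.sum_comm]
  refine Finset.sum_congr rfl fun i _ => Finset.sum_congr rfl fun j _ => ?_
  rw [Real.rpow_two, sq_abs, sq]

lemma frobNorm_vecMulVec {n : ℕ} (u v : Fin n → ℝ) :
    frobNorm (vecMulVec u v) = euclNorm u * euclNorm v := by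
  have h : (0:ℝ) ≤ u ⬝ᵥ u := Finset.sum_nonneg fun i _ => mul_self_nonneg _
  rw [frobNorm, euclNorm, euclNorm, ← Real.sqrt_mul h]
  congr 1
  rw [Matrix.trace]
  simp only [Matrix.diag, Matrix.mul_apply, Matrix.transpose_apply, vecMulVec_apply,
    dotProduct]
  rw [Finset.sum_mul_sum, Finset.sum_comm]
  refine Finset.sum_congr rfl fun j _ => Finset.sum_congr rfl fun i _ => ?_
  ring

lemma vecMulVec_mul' {n : ℕ} (u w a b : Fin n → ℝ) :
    vecMulVec u w * vecMulVec a b = (w ⬝ᵥ a) • vecMulVec u b := by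
  ext i j
  simp only [Matrix.mul_apply, vecMulVec_apply, Matrix.smul_apply, smul_eq_mul, dotProduct,
    Finset.sum_mul]
  exact Finset.sum_congr rfl fun k _ => by ring

/-- Bound on the consistency gradient (Equation (5), exact form): in the linear RC-MAE
dynamics with rank-one step gradients
`G j = (S j x̂ j − x j + (S j − T j) x̂ j)(x̂ j)ᵀ`, student update `S (j+1) = S j − λ • G j`,
teacher update `T (j+1) = α • T j + (1 − α) • S (j+1)` and `T 0 = S 0`, with `λ ≥ 0` and
`α ≥ 0`, the Frobenius norm of the consistency gradient at time `t` with current masked input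
`x̃` satisfies
`‖(S t − T t) x̃ x̃ᵀ‖_F ≤ λ ‖x̃‖ ∑_{i=1}^{t} α^i |⟨x̂ (t−i), x̃⟩| ‖S (t−i) x̂ (t−i) − x (t−i) +
(S (t−i) − T (t−i)) x̂ (t−i)‖`. -/
theorem consistency_gradient_bound {n : ℕ} (hn : 1 ≤ n)
    (lam α : ℝ) (hlam : 0 ≤ lam) (hα : 0 ≤ α)
    (x xhat : ℕ → (Fin n → ℝ))
    (S T G : ℕ → Matrix (Fin n) (Fin n) ℝ)
    (hG : ∀ j, G j = vecMulVec (S j *ᵥ xhat j - x j + (S j - T j) *ᵥ xhat j) (xhat j))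
    (hS : ∀ j, S (j + 1) = S j - lam • G j)
    (hT : ∀ j, T (j + 1) = α • T j + (1 - α) • S (j + 1))
    (hT0 : T 0 = S 0) :
    ∀ (t : ℕ) (xt : Fin n → ℝ),
      frobNorm ((S t - T t) * vecMulVec xt xt)
        ≤ lam * euclNorm xt *
            ∑ i ∈ Finset.Icc 1 t,
              α ^ i * |xhat (t - i) ⬝ᵥ xt| *
                euclNorm (S (t - i) *ᵥ xhat (t - i) - x (t - i) +
                  (S (t - i) - T (t - i)) *ᵥ xhat (t - i)) := by
  intro t xt
  set E := euclNorm xt with hE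
  have hE0 : 0 ≤ E := Real.sqrt_nonneg _
  set F : ℕ → ℝ := fun k =>
    |xhat k ⬝ᵥ xt| * euclNorm (S k *ᵥ xhat k - x k + (S k - T k) *ᵥ xhat k) with hF
  have hstep : ∀ j, S (j + 1) - T (j + 1) = α • (S j - T j) - (α * lam) • G j := by
    intro j
    rw [hT j, hS j]
    module
  have hGmul : ∀ j, frobNorm (G j * vecMulVec xt xt) = F j * E := by
    intro j
    rw [hG j, vecMulVec_mul', frobNorm_eq_norm, norm_smul, ← frobNorm_eq_norm,
      frobNorm_vecMulVec, Real.norm_eq_abs, hF]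
    ring
  induction t with
  | zero => simp [hT0, frobNorm]
  | succ t ih =>
    have hsum : ∑ i ∈ Finset.Icc 1 (t + 1), α ^ i * F (t + 1 - i)
        = α * F t + α * ∑ i ∈ Finset.Icc 1 t, α ^ i * F (t - i) := by
      rw [← Finset.Ico_add_one_right_eq_Icc, Finset.sum_Ico_eq_sum_range, ← Finset.Ico_add_one_right_eq_Icc,
        Finset.sum_Ico_eq_sum_range]
      simp only [Nat.add_sub_cancel, Nat.succ_sub_one]
      rw [Finset.sum_range_succ', Finset.mul_sum, add_comm]
      congr 1
      · simp
      · refine Finset.sum_congr rfl fun i _ => ?_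
        have h1 : t + 1 - (1 + (i + 1)) = t - (1 + i) := by omega
        rw [h1]; ring
    have key : frobNorm ((S (t + 1) - T (t + 1)) * vecMulVec xt xt)
        ≤ α * frobNorm ((S t - T t) * vecMulVec xt xt) + (α * lam) * (F t * E) := by
      rw [← hGmul t, frobNorm_eq_norm, hstep t, Matrix.sub_mul, Matrix.smul_mul,
        Matrix.smul_mul, frobNorm_eq_norm, frobNorm_eq_norm]
      refine (norm_sub_le _ _).trans ?_
      rw [norm_smul, norm_smul, Real.norm_eq_abs, Real.norm_eq_abs,
        abs_of_nonneg hα, abs_of_nonneg (mul_nonneg hα hlam)]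
    have hIcc : ∀ s : ℕ, ∑ i ∈ Finset.Icc 1 s,
        α ^ i * |xhat (s - i) ⬝ᵥ xt| *
          euclNorm (S (s - i) *ᵥ xhat (s - i) - x (s - i) +
            (S (s - i) - T (s - i)) *ᵥ xhat (s - i))
        = ∑ i ∈ Finset.Icc 1 s, α ^ i * F (s - i) := by
      intro s
      exact Finset.sum_congr rfl fun i _ => by rw [hF]; ring
    rw [hIcc] at ih ⊢
    rw [hsum]
    calc frobNorm ((S (t + 1) - T (t + 1)) * vecMulVec xt xt)
        ≤ α * frobNorm ((S t - T t) * vecMulVec xt xt) + (α * lam) * (F t * E) := key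
      _ ≤ α * (lam * E * ∑ i ∈ Finset.Icc 1 t, α ^ i * F (t - i)) + (α * lam) * (F t * E) := by
          gcongr
      _ = lam * E * (α * F t + α * ∑ i ∈ Finset.Icc 1 t, α ^ i * F (t - i)) := by ring
end
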